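/- Let G ≤ Out(F_n) be a finite subgroup, E its preimage in Aut(F_n), N(G) the normalizer of G in Out(F_n), and Out⁰(E) the image in Out(E) of the automorphisms of E leaving Inn(F_n) invariant. Then there is a short exact sequence 1 → G → N(G) → Out⁰(E) → 1. -/

import Mathlib

/-!
The argument works for any group `F` with trivial centre, and a free group of rank at least two
is one. An element of `N(G)` lifts to `α ∈ Aut(F)` normalising `E`, and conjugation by `α`
is an automorphism of `E` preserving `Inn(F)`; another lift differs by an element of
`Inn(F) ≤ E`, so the class in `Out(E)` is well defined. Since `F` is centreless, `f ↦ c_f`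
identifies `F` with `Inn(F)`. Hence an automorphism `Ψ` of `E` preserving `Inn(F)` induces
some `α ∈ Aut(F)` with `Ψ c_f = c_{α f}`, and comparing `Ψ (e c_f e⁻¹)` with `c_{α (e f)}`
shows `Ψ e = α e α⁻¹`. Likewise, conjugation by `α` is inner on `E`, say by `e`, only if `α`
and `e` induce the same automorphism of `Inn(F) ≅ F`, i.e. `α = e ∈ E`.
-/

/-- Inner automorphisms form a normal subgroup of `MulAut G`. -/
instance innRangeNormal (G : Type*) [Group G] : (MulAut.conj : G →* MulAut G).range.Normal := by
  constructor
  intro x hx Ψ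
  obtain ⟨g, rfl⟩ := hx
  refine ⟨Ψ g, ?_⟩
  ext y
  simp [MulAut.conj_apply, MulAut.mul_apply, map_mul, map_inv]

/-- The outer automorphism group `Out(G) = Aut(G)/Inn(G)`. -/
abbrev OutGroup (G : Type*) [Group G] :=
  MulAut G ⧸ (MulAut.conj : G →* MulAut G).range

/-- The natural projection `Aut(G) → Out(G)`. -/
def outProj (G : Type*) [Group G] : MulAut G →* OutGroup G :=
  QuotientGroup.mk' _

namespace FreeGroup

theorem center_eq_bot {α : Type*} [Nontrivial α] :
    Subgroup.center (FreeGroup α) = ⊥ := by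
  classical
  refine eq_bot_iff.mpr fun x hx => Subgroup.mem_bot.mpr <| by_contra fun hx1 => ?_
  set w := x.toWord
  have hw : w ≠ [] := mt toWord_eq_nil_iff.mp hx1
  obtain ⟨c, hc⟩ := exists_ne (w.head hw).1
  -- A letter that cancels neither with the first letter of `w` nor with the last one.
  set e : α × Bool := (c, (w.getLast hw).2)
  have hleft : IsReduced (e :: w) :=
    List.isChain_cons.mpr ⟨by simp [List.head?_eq_some_head hw, e, hc], isReduced_toWord⟩
  have hright : IsReduced (w ++ [e]) :=
    isReduced_toWord.append IsReduced.singleton <| by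
      rw [List.getLast?_eq_some_getLast hw]
      simp [e]
  have hcomm : mk (e :: w) = mk (w ++ [e]) := by
    rw [← List.singleton_append, ← mul_mk, ← mul_mk, mk_toWord]
    exact Subgroup.mem_center_iff.mp hx _
  have hwords := congrArg toWord hcomm
  rw [toWord_mk, toWord_mk, hleft.reduce_eq, hright.reduce_eq] at hwords
  have hhead : e = w.head hw := by
    simpa [List.head?_append, List.head?_eq_some_head hw] using congrArg List.head? hwords
  exact hc (congrArg Prod.fst hhead)

end FreeGroup

theorem MulAut.conj_injective_of_center_eq_bot {F : Type*} [Group F]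
    (hF : Subgroup.center F = ⊥) : Function.Injective (MulAut.conj : F →* MulAut F) := by
  refine (injective_iff_map_eq_one _).mpr fun g hg => ?_
  rw [← Subgroup.mem_bot, ← hF, Subgroup.mem_center_iff]
  intro y
  exact (mul_inv_eq_iff_eq_mul.mp (DFunLike.congr_fun hg y)).symm

theorem MulAut.mul_conj_mul_inv {F : Type*} [Group F] (α : MulAut F) (f : F) :
    α * MulAut.conj f * α⁻¹ = MulAut.conj (α f) := by
  ext
  simp

namespace Subgroup

variable {H : Type*} [Group H] (K : Subgroup H)

def normalizerConj : normalizer (K : Set H) →* MulAut K where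
  toFun g := ((MulAut.conj (g : H)).subgroupMap K).trans
    (MulEquiv.subgroupCongr (mem_normalizer_iff_map_conj_eq.mp g.2))
  map_one' := by ext; simp
  map_mul' _ _ := by ext; simp [mul_assoc]

@[simp]
theorem coe_normalizerConj_apply (g : normalizer (K : Set H)) (k : K) :
    ((K.normalizerConj g k : K) : H) = g * k * (g : H)⁻¹ :=
  rfl

theorem map_normalizerConj_subgroupOf (N : Subgroup H) [N.Normal] (g : normalizer (K : Set H)) :
    (N.subgroupOf K).map (K.normalizerConj g).toMonoidHom = N.subgroupOf K := by
  refine le_antisymm (map_le_iff_le_comap.mpr fun k hk => ?_) fun k hk => ?_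
  · exact mem_subgroupOf.mpr (‹N.Normal›.conj_mem _ (mem_subgroupOf.mp hk) g)
  · refine ⟨K.normalizerConj g⁻¹ k,
      mem_subgroupOf.mpr (‹N.Normal›.conj_mem _ (mem_subgroupOf.mp hk) _), ?_⟩
    change (K.normalizerConj g * K.normalizerConj g⁻¹) k = k
    rw [← map_mul, mul_inv_cancel, map_one, MulAut.one_apply]

end Subgroup

theorem outProj_surjective (G : Type*) [Group G] : Function.Surjective (outProj G) :=
  QuotientGroup.mk'_surjective _

theorem ker_outProj (G : Type*) [Group G] :
    (outProj G).ker = (MulAut.conj : G →* MulAut G).range :=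
  QuotientGroup.ker_mk' _

section Centerless

open Subgroup

local notation "Inn" F:max => MonoidHom.range (MulAut.conj : F →* MulAut F)

variable {F : Type*} [Group F] {E : Subgroup (MulAut F)}

theorem normalizerConj_mem_range_conj_iff (hF : center F = ⊥) (hInn : Inn F ≤ E)
    (g : normalizer (E : Set (MulAut F))) :
    E.normalizerConj g ∈ (MulAut.conj : E →* MulAut E).range ↔ (g : MulAut F) ∈ E := by
  refine ⟨fun ⟨e, he⟩ => ?_, fun hg => ⟨⟨g, hg⟩, rfl⟩⟩
  suffices (e : MulAut F) = g from this ▸ e.2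
  ext f
  apply MulAut.conj_injective_of_center_eq_bot hF
  have hf :=
    congrArg (fun ψ : MulAut E => ((ψ ⟨MulAut.conj f, hInn ⟨f, rfl⟩⟩ : E) : MulAut F)) he
  simpa [← MulAut.mul_conj_mul_inv] using hf

theorem exists_apply_conj_eq_conj_apply (hF : center F = ⊥) (hInn : Inn F ≤ E) (Ψ : MulAut E)
    (hΨ : ((Inn F).subgroupOf E).map Ψ.toMonoidHom = (Inn F).subgroupOf E) :
    ∃ α : MulAut F, ∀ f : F,
      ((Ψ ⟨MulAut.conj f, hInn ⟨f, rfl⟩⟩ : E) : MulAut F) = MulAut.conj (α f) := by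
  obtain ⟨ι, hι⟩ : ∃ ι : F ≃* (Inn F).subgroupOf E,
      ∀ f, ((ι f : E) : MulAut F) = MulAut.conj f :=
    ⟨(MonoidHom.ofInjective (MulAut.conj_injective_of_center_eq_bot hF)).trans
      (subgroupOfEquivOfLe hInn).symm, fun _ => rfl⟩
  refine ⟨(ι.trans ((Ψ.subgroupMap _).trans (MulEquiv.subgroupCongr hΨ))).trans ι.symm,
    fun f => ?_⟩
  refine Eq.trans ?_ (hι _)
  rw [MulEquiv.trans_apply, MulEquiv.apply_symm_apply]
  have hιf : (ι f : E) = ⟨MulAut.conj f, hInn ⟨f, rfl⟩⟩ := Subtype.ext (hι f)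
  rw [← hιf]
  rfl

theorem coe_apply_eq_mul_mul_inv (hF : center F = ⊥) (hInn : Inn F ≤ E) (Ψ : MulAut E)
    (α : MulAut F) (hα : ∀ f : F,
      ((Ψ ⟨MulAut.conj f, hInn ⟨f, rfl⟩⟩ : E) : MulAut F) = MulAut.conj (α f)) (e : E) :
    ((Ψ e : E) : MulAut F) = α * e * α⁻¹ := by
  rw [eq_mul_inv_iff_mul_eq]
  ext f
  apply MulAut.conj_injective_of_center_eq_bot hF
  have hconj : e * ⟨MulAut.conj f, hInn ⟨f, rfl⟩⟩ * e⁻¹ =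
      ⟨MulAut.conj ((e : MulAut F) f), hInn ⟨_, rfl⟩⟩ :=
    Subtype.ext (MulAut.mul_conj_mul_inv _ f)
  calc MulAut.conj ((Ψ e : MulAut F) (α f))
      = (Ψ e : MulAut F) * MulAut.conj (α f) * (Ψ e : MulAut F)⁻¹ :=
        (MulAut.mul_conj_mul_inv _ _).symm
    _ = (Ψ (e * ⟨MulAut.conj f, hInn ⟨f, rfl⟩⟩ * e⁻¹) : MulAut F) := by simp [hα]
    _ = MulAut.conj (α ((e : MulAut F) f)) := by rw [hconj, hα]

theorem range_normalizerConj_eq (hF : center F = ⊥) (hInn : Inn F ≤ E) :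
    Set.range E.normalizerConj =
      {Ψ : MulAut E | ((Inn F).subgroupOf E).map Ψ.toMonoidHom = (Inn F).subgroupOf E} := by
  refine Set.Subset.antisymm ?_ fun Ψ hΨ => ?_
  · rintro _ ⟨g, rfl⟩
    exact map_normalizerConj_subgroupOf E _ g
  obtain ⟨α, hα⟩ := exists_apply_conj_eq_conj_apply hF hInn Ψ hΨ
  have hΨα := coe_apply_eq_mul_mul_inv hF hInn Ψ α hα
  have hαE : α ∈ normalizer (E : Set (MulAut F)) := by
    refine mem_normalizer_iff.mpr fun x =>
      ⟨fun hx => hΨα ⟨x, hx⟩ ▸ (Ψ ⟨x, hx⟩).2, fun hx => ?_⟩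
    have hx' := hΨα (Ψ.symm ⟨_, hx⟩)
    rw [MulEquiv.apply_symm_apply] at hx'
    exact mul_left_cancel (mul_right_cancel hx') ▸ (Ψ.symm ⟨_, hx⟩).2
  exact ⟨⟨α, hαE⟩, MulEquiv.ext fun e => Subtype.ext (hΨα e).symm⟩

theorem outProj_normalizerConj_eq_one_iff (hF : center F = ⊥) (hInn : Inn F ≤ E)
    (g : normalizer (E : Set (MulAut F))) :
    outProj E (E.normalizerConj g) = 1 ↔ (g : MulAut F) ∈ E := by
  rw [← MonoidHom.mem_ker, ker_outProj, normalizerConj_mem_range_conj_iff hF hInn]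

end Centerless

open Subgroup in
theorem exists_normalizer_hom_ker_eq_range_eq {F : Type*} [Group F] (hF : center F = ⊥)
    (G : Subgroup (OutGroup F)) :
    ∃ φ : normalizer (G : Set (OutGroup F)) →* OutGroup (G.comap (outProj F)),
      φ.ker = G.subgroupOf (normalizer (G : Set (OutGroup F))) ∧
      Set.range φ = outProj _ '' {Ψ : MulAut (G.comap (outProj F)) |
        ((MulAut.conj : F →* MulAut F).range.subgroupOf _).map Ψ.toMonoidHom =
          (MulAut.conj : F →* MulAut F).range.subgroupOf _} := by
  set E := G.comap (outProj F)
  have hInn : (MulAut.conj : F →* MulAut F).range ≤ E :=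
    ker_outProj F ▸ (outProj F).ker_le_comap G
  have hNE :
      normalizer (E : Set (MulAut F)) = (normalizer (G : Set (OutGroup F))).comap (outProj F) :=
    (comap_normalizer_eq_of_surjective G (outProj_surjective F)).symm
  let π : normalizer (E : Set (MulAut F)) →* normalizer (G : Set (OutGroup F)) :=
    ((outProj F).subgroupComap _).comp (MulEquiv.subgroupCongr hNE).toMonoidHom
  have hπ : Function.Surjective π :=
    ((outProj F).subgroupComap_surjective_of_surjective _ (outProj_surjective F)).comp
      (MulEquiv.subgroupCongr hNE).surjective
  let ψ := (outProj E).comp E.normalizerConj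
  have hψ : ∀ g, ψ g = 1 ↔ (g : MulAut F) ∈ E := outProj_normalizerConj_eq_one_iff hF hInn
  have hker : π.ker ≤ ψ.ker := fun g hg => (hψ g).mpr <|
    show outProj F g ∈ G by
      rw [show outProj F g = 1 from congrArg Subtype.val hg]
      exact G.one_mem
  refine ⟨π.liftOfSurjective hπ ⟨ψ, hker⟩, ?_, ?_⟩
  · ext x
    obtain ⟨g, rfl⟩ := hπ x
    rw [MonoidHom.mem_ker, MonoidHom.liftOfRightInverse_comp_apply, hψ, mem_subgroupOf]
    rfl
  · rw [← hπ.range_comp, ← MonoidHom.coe_comp, MonoidHom.liftOfRightInverse_comp,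
      MonoidHom.coe_comp, Set.range_comp, range_normalizerConj_eq hF hInn]

theorem normalizer_ses_general
    (n : ℕ) (hn : 2 ≤ n) (G : Subgroup (OutGroup (FreeGroup (Fin n))))
    (E : Subgroup (MulAut (FreeGroup (Fin n)))) (hE : E = G.comap (outProj _))
    (InnE : Subgroup E)
    (hInnE : InnE = ((MulAut.conj : FreeGroup (Fin n) →* MulAut (FreeGroup (Fin n))).range).subgroupOf E) :
    ∃ φ : Subgroup.normalizer (G : Set (OutGroup (FreeGroup (Fin n)))) →* OutGroup E,
      φ.ker = G.subgroupOf (Subgroup.normalizer (G : Set (OutGroup (FreeGroup (Fin n))))) ∧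
      Set.range φ = (outProj E) '' {Ψ : MulAut E | InnE.map Ψ.toMonoidHom = InnE} := by
  subst hE hInnE
  have : Nontrivial (Fin n) := Fin.nontrivial_iff_two_le.mpr hn
  exact exists_normalizer_hom_ker_eq_range_eq FreeGroup.center_eq_bot G

/-- Let `G ≤ Out(F_n)` be a finite subgroup, `E ≤ Aut(F_n)` its full preimage,
`N(G)` the normalizer of `G` in `Out(F_n)`, and `Out⁰(E)` the image in `Out(E)` of the
automorphisms of `E` leaving `Inn(F_n)` invariant.  Then there is a short exact sequence
`1 → G → N(G) → Out⁰(E) → 1`: i.e. there is a homomorphism `φ : N(G) → Out(E)` with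
kernel `G` and image exactly `Out⁰(E)`. -/
theorem normalizer_ses
    (n : ℕ) (hn : 2 ≤ n) (G : Subgroup (OutGroup (FreeGroup (Fin n)))) (hG : Finite G)
    (E : Subgroup (MulAut (FreeGroup (Fin n)))) (hE : E = G.comap (outProj _))
    (InnE : Subgroup E)
    (hInnE : InnE = ((MulAut.conj : FreeGroup (Fin n) →* MulAut (FreeGroup (Fin n))).range).subgroupOf E) :
    ∃ φ : Subgroup.normalizer (G : Set (OutGroup (FreeGroup (Fin n)))) →* OutGroup E,
      φ.ker = G.subgroupOf (Subgroup.normalizer (G : Set (OutGroup (FreeGroup (Fin n))))) ∧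
      Set.range φ = (outProj E) '' {Ψ : MulAut E | InnE.map Ψ.toMonoidHom = InnE} :=
  normalizer_ses_general n hn G E hE InnE hInnE
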